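/- arXiv:1809.01279 — 6 statements merged into one kernel-verified Lean document; each statement's English description precedes it below -/
import Mathlib

section
/- For differentiable functions (or elements of a differential field) v_1,...,v_a, u, w, the Wronskian identity Wr(Wr(v_1,...,v_a,u), Wr(v_1,...,v_a,w)) = Wr(v_1,...,v_a,u,w) · Wr(v_1,...,v_a) holds, where Wr denotes the Wronskian determinant Wr(f_1,...,f_r) = det(f_j^{(i-1)})_{i,j=1}^r. -/
/-
Let `W` be the Wronskian matrix of `(v, u, w)`. Every Wronskian in the identity is a minor of `W`:
`Wr(v,u)` and `Wr(v,w)` keep the first `a + 1` rows, and since differentiating any row of a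
Wronskian matrix but the last reproduces the next row, `D Wr(v,u)` and `D Wr(v,w)` keep the same
columns but skip row `a` instead. The identity is therefore the Desnanot–Jacobi identity for `W`
and its last two rows and columns. That identity follows from Schur complements when the top-left
block is invertible, and in general from the case of the generic matrix over `ℤ[X_ij]`, whose
top-left minor is nonzero and hence invertible in the fraction field.
-/

/-- The Wronskian `Wr(f_1,…,f_r) = det(f_j^{(i-1)})` of elements of a differential field. -/
noncomputable def wronskian {K : Type*} [Field K] [CharZero K] (D : Derivation ℚ K K)
    {r : ℕ} (f : Fin r → K) : K :=
  (Matrix.of fun i j : Fin r => (⇑D)^[(i : ℕ)] (f j)).det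

open Matrix

namespace Derivation

theorem leibniz_prod {R A M : Type*} [CommSemiring R] [CommSemiring A] [AddCommMonoid M]
    [Algebra R A] [Module A M] [Module R M] (D : Derivation R A M) {ι : Type*} [DecidableEq ι]
    (s : Finset ι) (g : ι → A) :
    D (∏ i ∈ s, g i) = ∑ i ∈ s, (∏ j ∈ s.erase i, g j) • D (g i) := by
  induction s using Finset.induction_on with
  | empty => simp
  | insert b s hb ih =>
    rw [Finset.prod_insert hb, leibniz, ih, Finset.sum_insert hb, Finset.erase_insert hb,
      Finset.smul_sum, add_comm]
    congr 1
    refine Finset.sum_congr rfl fun i hi => ?_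
    rw [Finset.erase_insert_of_ne (ne_of_mem_of_not_mem hi hb).symm,
      Finset.prod_insert fun h => hb (Finset.mem_of_mem_erase h), mul_smul]

theorem map_det {R A : Type*} [CommSemiring R] [CommRing A] [Algebra R A]
    (D : Derivation R A A) {n : Type*} [Fintype n] [DecidableEq n] (M : Matrix n n A) :
    D M.det = ∑ k, (M.updateRow k fun j => D (M k j)).det := by
  have det_eq : ∀ N : Matrix n n A, N.det = ∑ σ : Equiv.Perm n, σ.sign • ∏ i, N i (σ i) :=
    fun N => by rw [← det_transpose, det_apply]; rfl
  simp only [det_eq, map_sum, Units.smul_def, map_zsmul, leibniz_prod, Finset.smul_sum]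
  rw [Finset.sum_comm]
  refine Finset.sum_congr rfl fun k _ => Finset.sum_congr rfl fun σ _ => ?_
  rw [← Finset.mul_prod_erase _ _ (Finset.mem_univ k), updateRow_self, smul_eq_mul, mul_comm]
  congr 2
  exact Finset.prod_congr rfl fun i hi => by rw [updateRow_ne (Finset.ne_of_mem_erase hi)]

end Derivation

namespace Matrix

variable {m R : Type*} [Fintype m] [DecidableEq m] [CommRing R]

/-- The determinant of the top-left `m × m` block bordered by row `k` and column `l` of the
bottom-right `2 × 2` block. -/
def borderedMinor (N : Matrix (m ⊕ Fin 2) (m ⊕ Fin 2) R) (k l : Fin 2) : R :=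
  (N.submatrix (Sum.map id fun _ : Fin 1 => k) (Sum.map id fun _ : Fin 1 => l)).det

theorem _root_.RingHom.map_borderedMinor {S : Type*} [CommRing S] (φ : R →+* S)
    (N : Matrix (m ⊕ Fin 2) (m ⊕ Fin 2) R) (k l : Fin 2) :
    φ (N.borderedMinor k l) = (N.map φ).borderedMinor k l := by
  rw [borderedMinor, borderedMinor, RingHom.map_det, RingHom.mapMatrix_apply, submatrix_map]

theorem borderedMinor_eq_of_invertible (N : Matrix (m ⊕ Fin 2) (m ⊕ Fin 2) R)
    [Invertible N.toBlocks₁₁] (k l : Fin 2) :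
    N.borderedMinor k l =
      N.toBlocks₁₁.det * (N.toBlocks₂₂ - N.toBlocks₂₁ * ⅟N.toBlocks₁₁ * N.toBlocks₁₂) k l := by
  rw [borderedMinor, ← fromBlocks_toBlocks (N.submatrix _ _)]
  exact (det_fromBlocks₁₁ N.toBlocks₁₁ _ _ _).trans (congrArg _ (det_fin_one _))

theorem desnanot_jacobi_of_isUnit (N : Matrix (m ⊕ Fin 2) (m ⊕ Fin 2) R)
    (h : IsUnit (N.submatrix Sum.inl Sum.inl).det) :
    N.borderedMinor 0 0 * N.borderedMinor 1 1 - N.borderedMinor 0 1 * N.borderedMinor 1 0 =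
      N.det * (N.submatrix Sum.inl Sum.inl).det := by
  have := N.toBlocks₁₁.invertibleOfIsUnitDet h
  have schur : N.det = N.toBlocks₁₁.det *
      (N.toBlocks₂₂ - N.toBlocks₂₁ * ⅟N.toBlocks₁₁ * N.toBlocks₁₂).det := by
    rw [← det_fromBlocks₁₁, fromBlocks_toBlocks]
  rw [schur, det_fin_two]
  simp only [borderedMinor_eq_of_invertible]
  change _ = _ * N.toBlocks₁₁.det
  ring

theorem det_mvPolynomialX_submatrix_ne_zero {n : Type*} [Nontrivial R] {e : m → n}
    (he : Function.Injective e) : ((mvPolynomialX n n R).submatrix e e).det ≠ 0 := by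
  have : (mvPolynomialX n n R).submatrix e e =
      (mvPolynomialX m m R).map (MvPolynomial.rename (Prod.map e e)) := by
    ext i j
    simp [MvPolynomial.rename_X]
  rw [this, ← AlgHom.coe_toRingHom, ← RingHom.mapMatrix_apply, ← RingHom.map_det,
    AlgHom.coe_toRingHom]
  exact (map_ne_zero_iff _ (MvPolynomial.rename_injective _ (he.prodMap he))).mpr
    (det_mvPolynomialX_ne_zero m R)

theorem desnanot_jacobi (N : Matrix (m ⊕ Fin 2) (m ⊕ Fin 2) R) :
    N.borderedMinor 0 0 * N.borderedMinor 1 1 - N.borderedMinor 0 1 * N.borderedMinor 1 0 =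
      N.det * (N.submatrix Sum.inl Sum.inl).det := by
  let X := mvPolynomialX (m ⊕ Fin 2) (m ⊕ Fin 2) ℤ
  let A := MvPolynomial ((m ⊕ Fin 2) × (m ⊕ Fin 2)) ℤ
  have generic : X.borderedMinor 0 0 * X.borderedMinor 1 1 -
      X.borderedMinor 0 1 * X.borderedMinor 1 0 = X.det * (X.submatrix Sum.inl Sum.inl).det := by
    apply IsFractionRing.injective A (FractionRing A)
    simp only [map_sub, map_mul, RingHom.map_borderedMinor, RingHom.map_det,
      RingHom.mapMatrix_apply, ← submatrix_map]
    refine desnanot_jacobi_of_isUnit _ (isUnit_iff_ne_zero.mpr ?_)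
    rw [submatrix_map, ← RingHom.mapMatrix_apply, ← RingHom.map_det]
    exact (map_ne_zero_iff _ (IsFractionRing.injective A _)).mpr
      (det_mvPolynomialX_submatrix_ne_zero Sum.inl_injective)
  have := congrArg (MvPolynomial.eval₂Hom (Int.castRingHom R) fun p => N p.1 p.2) generic
  simp only [map_sub, map_mul, RingHom.map_borderedMinor, RingHom.map_det,
    RingHom.mapMatrix_apply, ← submatrix_map] at this
  rwa [MvPolynomial.coe_eval₂Hom, mvPolynomialX_map_eval₂] at this

theorem desnanot_jacobi_fin {n : ℕ} (M : Matrix (Fin (n + 2)) (Fin (n + 2)) R) :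
    (M.submatrix Fin.castSucc Fin.castSucc).det *
        (M.submatrix (Fin.last n).castSucc.succAbove (Fin.last n).castSucc.succAbove).det -
      (M.submatrix Fin.castSucc (Fin.last n).castSucc.succAbove).det *
        (M.submatrix (Fin.last n).castSucc.succAbove Fin.castSucc).det =
      M.det * (M.submatrix (Fin.castSucc ∘ Fin.castSucc) (Fin.castSucc ∘ Fin.castSucc)).det := by
  let e : Fin n ⊕ Fin 2 ≃ Fin (n + 2) := finSumFinEquiv
  have minor : ∀ {r c : Fin (n + 1) → Fin (n + 2)} {k l : Fin 2},
      r ∘ finSumFinEquiv = e ∘ Sum.map id (fun _ => k) →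
      c ∘ finSumFinEquiv = e ∘ Sum.map id (fun _ => l) →
      (M.submatrix r c).det = (M.submatrix e e).borderedMinor k l := by
    intro r c k l hr hc
    rw [← det_submatrix_equiv_self finSumFinEquiv, submatrix_submatrix, hr, hc]
    rfl
  have castSucc_comp : Fin.castSucc ∘ finSumFinEquiv = e ∘ Sum.map id (fun _ => 0) := by
    ext (i | i) <;> simp [e]
  have succAbove_comp : (Fin.last n).castSucc.succAbove ∘ finSumFinEquiv =
      e ∘ Sum.map id (fun _ => 1) := by
    ext (i | i) <;> simp [e, Fin.succAbove, Fin.lt_def]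
  rw [minor castSucc_comp castSucc_comp, minor succAbove_comp succAbove_comp,
    minor castSucc_comp succAbove_comp, minor succAbove_comp castSucc_comp,
    ← det_submatrix_equiv_self e M]
  exact desnanot_jacobi _

end Matrix

section Wronskian

variable {K : Type*} [Field K] [CharZero K] (D : Derivation ℚ K K)

theorem wronskian_fin_two (f : Fin 2 → K) : wronskian D f = f 0 * D (f 1) - f 1 * D (f 0) := by
  simp [wronskian, det_fin_two]

theorem derivation_wronskian {n : ℕ} (f : Fin (n + 1) → K) :
    D (wronskian D f) =
      (of fun i j => (⇑D)^[((Fin.last n).castSucc.succAbove i : ℕ)] (f j)).det := by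
  rw [wronskian, Derivation.map_det, Fin.sum_univ_castSucc, Finset.sum_eq_zero, zero_add]
  · congr 1
    ext i j
    refine Fin.lastCases ?_ (fun i => ?_) i
    · simp [Function.iterate_succ_apply']
    · simp [(Fin.castSucc_lt_last i).ne, Fin.succAbove_castSucc_of_lt]
  · intro k _
    refine det_zero_of_row_eq (Fin.castSucc_lt_succ (i := k)).ne (funext fun j => ?_)
    simp [(Fin.castSucc_lt_succ (i := k)).ne', Function.iterate_succ_apply']

end Wronskian

/-- The Wronskian identity
`Wr(Wr(v_1,…,v_a,u), Wr(v_1,…,v_a,w)) = Wr(v_1,…,v_a,u,w) · Wr(v_1,…,v_a)`. -/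
theorem stmt_6 {K : Type*} [Field K] [CharZero K] (D : Derivation ℚ K K)
    {a : ℕ} (v : Fin a → K) (u w : K) :
    wronskian D ![wronskian D (Fin.snoc v u), wronskian D (Fin.snoc v w)] =
      wronskian D (Fin.snoc (Fin.snoc v u) w) * wronskian D v := by
  set f : Fin (a + 2) → K := Fin.snoc (Fin.snoc v u) w
  set M := of fun i j : Fin (a + 2) => (⇑D)^[(i : ℕ)] (f j)
  set p := (Fin.last a).castSucc
  have f_succAbove : ∀ j, f (p.succAbove j) = (Fin.snoc v w : Fin (a + 1) → K) j :=
    Fin.lastCases (by simp [f, p]) fun j => by simp [f, p, Fin.succAbove_castSucc_of_lt]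
  have wr_u : wronskian D (Fin.snoc v u) = (M.submatrix Fin.castSucc Fin.castSucc).det :=
    congrArg det (ext fun i j => by simp [M, f])
  have wr_w : wronskian D (Fin.snoc v w) = (M.submatrix Fin.castSucc p.succAbove).det :=
    congrArg det (ext fun i j => by simp [M, f_succAbove])
  have d_wr_u : D (wronskian D (Fin.snoc v u)) = (M.submatrix p.succAbove Fin.castSucc).det :=
    (derivation_wronskian D _).trans (congrArg det (ext fun i j => by simp [M, f, p]))
  have d_wr_w : D (wronskian D (Fin.snoc v w)) = (M.submatrix p.succAbove p.succAbove).det :=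
    (derivation_wronskian D _).trans (congrArg det (ext fun i j => by simp [M, f_succAbove, p]))
  have wr_v : wronskian D v =
      (M.submatrix (Fin.castSucc ∘ Fin.castSucc) (Fin.castSucc ∘ Fin.castSucc)).det :=
    congrArg det (ext fun i j => by simp [M, f])
  rw [wronskian_fin_two]
  simp only [Matrix.cons_val_zero, Matrix.cons_val_one, Matrix.cons_val_fin_one]
  rw [d_wr_u, d_wr_w, wr_u, wr_w, wr_v]
  exact desnanot_jacobi_fin M
end

section
/- With h_1,...,h_m positive integers (m ≥ 2) and distinct complex numbers z_1,...,z_m, let N(x) = (Σ_k h_k)^{-1} Σ_{k=1}^m h_k Π_{j≠k}(x - z_j), a monic polynomial of degree m-1 (assume Σ h_k ≠ 0). If N has no root at z_1, then the logarithmic derivative of N evaluated at z_1 satisfies N'(z_1)/N(z_1) = Σ_{k=2}^m (h_1 + h_k)/(h_1 (z_1 - z_k)). -/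
/-!
Write `N = (∑ h_k)⁻¹ ∑_k h_k P_k` with `P_k = ∏_{j ≠ k} (X - z_j)`. Each `P_k` is monic of
degree `m - 1`, so the weights `(∑ h_k)⁻¹ h_k` summing to one make `N` monic. At the node `z_1`
every `P_k` with `k ≠ 1` vanishes, so `N(z_1) = (∑ h_k)⁻¹ h_1 R` with `R = ∏_{j ≠ 1} (z_1 - z_j)`,
while `P_k'(z_1) = R / (z_1 - z_k)` for `k ≠ 1` and `P_1'(z_1) = ∑_{k ≠ 1} R / (z_1 - z_k)`.
Collecting the coefficient `h_1 + h_k` of `R / (z_1 - z_k)` gives the logarithmic derivative.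
-/

open Polynomial Lagrange Finset

section WeightedNodal

variable {ι : Type*} [DecidableEq ι] {s : Finset ι} {i : ι}

noncomputable def weightedNodal {R : Type*} [CommRing R] (s : Finset ι) (v w : ι → R) : R[X] :=
  ∑ k ∈ s, C (w k) * nodal (s.erase k) v

section CommRing

variable {R : Type*} [CommRing R] {v w : ι → R}

theorem natDegree_weightedNodal_le [Nontrivial R] :
    (weightedNodal s v w).natDegree ≤ #s - 1 :=
  natDegree_sum_le_of_forall_le _ _ fun _ hk =>
    (natDegree_C_mul_le _ _).trans (natDegree_nodal.trans (card_erase_of_mem hk)).le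

theorem coeff_weightedNodal [Nontrivial R] :
    (weightedNodal s v w).coeff (#s - 1) = ∑ k ∈ s, w k := by
  rw [weightedNodal, finsetSum_coeff]
  refine sum_congr rfl fun k hk => ?_
  rw [coeff_C_mul, ← card_erase_of_mem hk, ← natDegree_nodal (v := v),
    nodal_monic.coeff_natDegree, mul_one]

theorem eval_weightedNodal_node (hi : i ∈ s) :
    (weightedNodal s v w).eval (v i) = w i * (nodal (s.erase i) v).eval (v i) := by
  rw [weightedNodal, eval_finsetSum, ← add_sum_erase _ _ hi, eval_mul, eval_C, add_eq_left]
  refine sum_eq_zero fun k hk => ?_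
  rw [eval_mul, eval_nodal_at_node (mem_erase.mpr ⟨(ne_of_mem_erase hk).symm, hi⟩), mul_zero]

theorem eval_derivative_weightedNodal_node (hi : i ∈ s) :
    (derivative (weightedNodal s v w)).eval (v i) =
      ∑ k ∈ s.erase i, (w i + w k) * (nodal ((s.erase i).erase k) v).eval (v i) := by
  have hterm : ∀ k ∈ s.erase i, (derivative (nodal (s.erase k) v)).eval (v i) =
      (nodal ((s.erase i).erase k) v).eval (v i) := fun k hk => by
    rw [eval_nodal_derivative_eval_node_eq (mem_erase.mpr ⟨(ne_of_mem_erase hk).symm, hi⟩),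
      erase_right_comm]
  simp only [weightedNodal, derivative_sum, derivative_C_mul, eval_finsetSum, eval_mul, eval_C]
  rw [← add_sum_erase _ _ hi, derivative_nodal, eval_finsetSum, mul_sum, ← sum_add_distrib]
  exact sum_congr rfl fun k hk => by rw [hterm k hk, add_mul]

end CommRing

section Field

variable {F : Type*} [Field F] {v w : ι → F}

theorem monic_C_inv_sum_mul_weightedNodal (hw : ∑ k ∈ s, w k ≠ 0) :
    (C (∑ k ∈ s, w k)⁻¹ * weightedNodal s v w).Monic :=
  monic_of_natDegree_le_of_coeff_eq_one _
    ((natDegree_C_mul_le _ _).trans natDegree_weightedNodal_le)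
    (by rw [coeff_C_mul, coeff_weightedNodal, inv_mul_cancel₀ hw])

theorem natDegree_C_inv_sum_mul_weightedNodal (hw : ∑ k ∈ s, w k ≠ 0) :
    (C (∑ k ∈ s, w k)⁻¹ * weightedNodal s v w).natDegree = #s - 1 :=
  natDegree_eq_of_le_of_coeff_ne_zero
    ((natDegree_C_mul_le _ _).trans natDegree_weightedNodal_le)
    (by rw [coeff_C_mul, coeff_weightedNodal, inv_mul_cancel₀ hw]; exact one_ne_zero)

theorem eval_derivative_div_eval_weightedNodal_node (hi : i ∈ s)
    (hN : (weightedNodal s v w).eval (v i) ≠ 0) :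
    (derivative (weightedNodal s v w)).eval (v i) / (weightedNodal s v w).eval (v i) =
      ∑ k ∈ s.erase i, (w i + w k) / (w i * (v i - v k)) := by
  have hsplit : ∀ k ∈ s.erase i, (nodal (s.erase i) v).eval (v i) =
      (v i - v k) * (nodal ((s.erase i).erase k) v).eval (v i) := fun k hk => by
    rw [nodal_eq_mul_nodal_erase hk, eval_mul, eval_sub, eval_X, eval_C]
  rw [eval_derivative_weightedNodal_node hi, sum_div]
  refine sum_congr rfl fun k hk => ?_
  rw [eval_weightedNodal_node hi, hsplit k hk] at hN ⊢
  rw [← mul_assoc, mul_div_mul_right _ _ (right_ne_zero_of_mul (right_ne_zero_of_mul hN))]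

end Field

end WeightedNodal

/-- With positive integers `h_1,…,h_m` (`m ≥ 2`) and distinct `z_1,…,z_m`, the monic degree
`m-1` polynomial `N(x) = (∑ h_k)⁻¹ ∑_k h_k ∏_{j≠k}(x - z_j)` satisfies, provided
`N(z_1) ≠ 0`: `N'(z_1)/N(z_1) = ∑_{k=2}^m (h_1 + h_k)/(h_1 (z_1 - z_k))`. -/
theorem stmt_10 (m : ℕ) (hm : 2 ≤ m) (h : Fin m → ℕ)
    (z : Fin m → ℂ)
    (hsum : (∑ k, (h k : ℂ)) ≠ 0)
    (N : Polynomial ℂ)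
    (hN : N = C (∑ k, (h k : ℂ))⁻¹ *
      ∑ k, C (h k : ℂ) * ∏ j ∈ Finset.univ.erase k, (X - C (z j)))
    (hroot : N.eval (z ⟨0, by omega⟩) ≠ 0) :
    N.Monic ∧ N.natDegree = m - 1 ∧
    (derivative N).eval (z ⟨0, by omega⟩) / N.eval (z ⟨0, by omega⟩) =
      ∑ k ∈ Finset.univ.erase (⟨0, by omega⟩ : Fin m),
        ((h ⟨0, by omega⟩ : ℂ) + (h k : ℂ)) /
          ((h ⟨0, by omega⟩ : ℂ) * (z ⟨0, by omega⟩ - z k)) := by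
  replace hN : N = C (∑ k, (h k : ℂ))⁻¹ * weightedNodal univ z (fun k => (h k : ℂ)) := hN
  subst hN
  refine ⟨monic_C_inv_sum_mul_weightedNodal hsum, ?_, ?_⟩
  · rw [natDegree_C_inv_sum_mul_weightedNodal hsum, card_univ, Fintype.card_fin]
  · rw [eval_mul, eval_C] at hroot
    rw [derivative_C_mul, eval_mul, eval_mul, eval_C, mul_div_mul_left _ _ (inv_ne_zero hsum)]
    exact eval_derivative_div_eval_weightedNodal_node (mem_univ _) (right_ne_zero_of_mul hroot)
end

section
/- Let h_1, h_2, h_3 be nonzero integers and z_1, z_2, z_3 distinct complex numbers. The polynomial N(x) = (h_1+h_2+h_3)x² - (h_1(z_2+z_3)+h_2(z_1+z_3)+h_3(z_1+z_2))x + (h_1 z_2 z_3 + h_2 z_1 z_3 + h_3 z_1 z_2) has a double root (i.e., its discriminant vanishes) if and only if the 2×2 matrix A = [[-(h_1+h_2)/(z_1-z_2), -h_3/(z_1-z_2)], [-h_2/(z_1-z_3), -(h_1+h_3)/(z_1-z_3)]] has a repeated eigenvalue. -/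
open Polynomial

/-!
The characteristic polynomial of a `2 × 2` matrix `A` is `X² - (tr A) X + det A`, so `A` has a
repeated eigenvalue exactly when `(tr A)² - 4 det A = 0`. Clearing the denominators
`z₁ - z₂` and `z₁ - z₃` turns this discriminant into the discriminant of `N`:
`disc N = ((z₁ - z₂)(z₁ - z₃))² · disc(charpoly A)`.
-/

theorem Polynomial.exists_X_sq_sub_C_mul_X_add_C_eq_sq_iff {K : Type*} [Field K] [NeZero (2 : K)]
    (s p : K) :
    (∃ μ : K, X ^ 2 - C s * X + C p = (X - C μ) ^ 2) ↔ discrim 1 (-s) p = 0 := by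
  have expand_sq (μ : K) : (X - C μ) ^ 2 = X ^ 2 - C (2 * μ) * X + C (μ ^ 2) := by
    simp only [C_mul, C_pow, C_ofNat]
    ring
  constructor
  · rintro ⟨μ, hμ⟩
    rw [expand_sq] at hμ
    have hs : s = 2 * μ := by simpa [-map_pow] using congrArg (coeff · 1) hμ
    have hp : p = μ ^ 2 := by simpa [-map_pow] using congrArg (coeff · 0) hμ
    rw [discrim, hs, hp]
    ring
  · intro h
    refine ⟨s / 2, ?_⟩
    have hp : p = (s / 2) ^ 2 := by
      rw [discrim] at h
      field_simp
      linear_combination -h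
    rw [expand_sq, mul_div_cancel₀ s two_ne_zero, hp]

theorem Matrix.exists_charpoly_eq_X_sub_C_sq_iff {K : Type*} [Field K] [NeZero (2 : K)]
    (A : Matrix (Fin 2) (Fin 2) K) :
    (∃ μ : K, A.charpoly = (X - C μ) ^ 2) ↔ discrim 1 (-A.trace) A.det = 0 := by
  rw [A.charpoly_fin_two]
  exact exists_X_sq_sub_C_mul_X_add_C_eq_sq_iff _ _

def gaudinMatrix {K : Type*} [Field K] (h₁ h₂ h₃ z₁ z₂ z₃ : K) : Matrix (Fin 2) (Fin 2) K :=
  !![-(h₁ + h₂) / (z₁ - z₂), -h₃ / (z₁ - z₂);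
     -h₂ / (z₁ - z₃), -(h₁ + h₃) / (z₁ - z₃)]

theorem discrim_eq_sq_mul_discrim_charpoly_gaudinMatrix {K : Type*} [Field K]
    (h₁ h₂ h₃ z₁ z₂ z₃ : K) (hz₁₂ : z₁ - z₂ ≠ 0) (hz₁₃ : z₁ - z₃ ≠ 0) :
    discrim (h₁ + h₂ + h₃) (-(h₁ * (z₂ + z₃) + h₂ * (z₁ + z₃) + h₃ * (z₁ + z₂)))
        (h₁ * z₂ * z₃ + h₂ * z₁ * z₃ + h₃ * z₁ * z₂) =
      ((z₁ - z₂) * (z₁ - z₃)) ^ 2 *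
        discrim 1 (-(gaudinMatrix h₁ h₂ h₃ z₁ z₂ z₃).trace)
          (gaudinMatrix h₁ h₂ h₃ z₁ z₂ z₃).det := by
  simp only [gaudinMatrix, discrim, Matrix.trace_fin_two_of, Matrix.det_fin_two_of]
  field_simp
  ring

theorem stmt_12_general (h₁ h₂ h₃ : ℤ)
    (z₁ z₂ z₃ : ℂ) (hz₁₂ : z₁ ≠ z₂) (hz₁₃ : z₁ ≠ z₃) :
    (((h₁ : ℂ) * (z₂ + z₃) + (h₂ : ℂ) * (z₁ + z₃) + (h₃ : ℂ) * (z₁ + z₂)) ^ 2 -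
        4 * ((h₁ : ℂ) + (h₂ : ℂ) + (h₃ : ℂ)) *
          ((h₁ : ℂ) * z₂ * z₃ + (h₂ : ℂ) * z₁ * z₃ + (h₃ : ℂ) * z₁ * z₂) = 0) ↔
      ∃ μ : ℂ,
        (Matrix.charpoly
          !![-((h₁ : ℂ) + (h₂ : ℂ)) / (z₁ - z₂), -(h₃ : ℂ) / (z₁ - z₂);
             -(h₂ : ℂ) / (z₁ - z₃), -((h₁ : ℂ) + (h₃ : ℂ)) / (z₁ - z₃)]) =
          (X - C μ) ^ 2 := by
  have hz₁₂' := sub_ne_zero.mpr hz₁₂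
  have hz₁₃' := sub_ne_zero.mpr hz₁₃
  rw [← neg_sq, ← discrim,
    discrim_eq_sq_mul_discrim_charpoly_gaudinMatrix _ _ _ _ _ _ hz₁₂' hz₁₃', mul_eq_zero,
    or_iff_right (pow_ne_zero _ (mul_ne_zero hz₁₂' hz₁₃')),
    ← Matrix.exists_charpoly_eq_X_sub_C_sq_iff]
  rfl

/-- The quadratic `N(x) = (h₁+h₂+h₃)x² - (h₁(z₂+z₃)+h₂(z₁+z₃)+h₃(z₁+z₂))x
+ (h₁z₂z₃+h₂z₁z₃+h₃z₁z₂)` has a double root (vanishing discriminant) if and only if the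
matrix `[[-(h₁+h₂)/(z₁-z₂), -h₃/(z₁-z₂)], [-h₂/(z₁-z₃), -(h₁+h₃)/(z₁-z₃)]]` has a repeated
eigenvalue, i.e. its characteristic polynomial is `(X - μ)²` for some `μ`. -/
theorem stmt_12 (h₁ h₂ h₃ : ℤ) (hh₁ : h₁ ≠ 0) (hh₂ : h₂ ≠ 0) (hh₃ : h₃ ≠ 0)
    (z₁ z₂ z₃ : ℂ) (hz₁₂ : z₁ ≠ z₂) (hz₁₃ : z₁ ≠ z₃) (hz₂₃ : z₂ ≠ z₃) :
    (((h₁ : ℂ) * (z₂ + z₃) + (h₂ : ℂ) * (z₁ + z₃) + (h₃ : ℂ) * (z₁ + z₂)) ^ 2 -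
        4 * ((h₁ : ℂ) + (h₂ : ℂ) + (h₃ : ℂ)) *
          ((h₁ : ℂ) * z₂ * z₃ + (h₂ : ℂ) * z₁ * z₃ + (h₃ : ℂ) * z₁ * z₂) = 0) ↔
      ∃ μ : ℂ,
        (Matrix.charpoly
          !![-((h₁ : ℂ) + (h₂ : ℂ)) / (z₁ - z₂), -(h₃ : ℂ) / (z₁ - z₂);
             -(h₂ : ℂ) / (z₁ - z₃), -((h₁ : ℂ) + (h₃ : ℂ)) / (z₁ - z₃)]) =
          (X - C μ) ^ 2 :=
  stmt_12_general h₁ h₂ h₃ z₁ z₂ z₃ hz₁₂ hz₁₃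
end

section
/- Let M be a multiset of r integers. There exists a unique weakly increasing sequence M̄ = (c_1 < c_2 < ... < c_r) of r distinct integers such that: (i) M̄ dominates M (when M is sorted increasingly as m_1 ≤ ... ≤ m_r, c_i ≥ m_i for all i), and (ii) any strictly increasing integer sequence M' of length r dominating M also dominates M̄. -/
/-!
An integer sequence `c` is strictly increasing iff `c i - i` is weakly increasing. Shifting by
`i` therefore turns the question into finding the least monotone majorant of `M i - i`, which is
its running maximum: `M̄ i = i + max_{j ≤ i} (M j - j)`.
-/

theorem Fin.strictMono_iff_monotone_sub_val {r : ℕ} {f : Fin r → ℤ} :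
    StrictMono f ↔ Monotone fun i => f i - i := by
  refine ⟨fun hf j i hji => ?_, fun hf j i hji => ?_⟩
  · have hcard : (Finset.Icc j i).card ≤ (Finset.Icc (f j) (f i)).card :=
      Finset.card_le_card_of_injOn f
        (fun k hk => by
          obtain ⟨hjk, hki⟩ := Finset.mem_Icc.mp hk
          exact Finset.mem_Icc.mpr ⟨hf.monotone hjk, hf.monotone hki⟩)
        hf.injective.injOn
    rw [Fin.card_Icc, Int.card_Icc] at hcard
    have : (j : ℕ) ≤ i := hji
    change f j - j ≤ f i - i
    omega
  · have : f j - j ≤ f i - i := hf hji.le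
    have : (j : ℕ) < i := hji
    omega

def dominant {r : ℕ} (M : Fin r → ℤ) (i : Fin r) : ℤ :=
  partialSups (fun j : Fin r => M j - j) i + i

section Dominant

variable {r : ℕ} (M : Fin r → ℤ)

theorem le_dominant (i : Fin r) : M i ≤ dominant M i :=
  sub_le_iff_le_add.mp (le_partialSups_of_le (fun j : Fin r => M j - j) le_rfl)

theorem strictMono_dominant : StrictMono (dominant M) :=
  Fin.strictMono_iff_monotone_sub_val.mpr <| by
    simpa only [dominant, add_sub_cancel_right] using partialSups_monotone (fun j : Fin r => M j - j)

theorem dominant_le {c : Fin r → ℤ} (hc : StrictMono c) (hMc : ∀ i, M i ≤ c i) (i : Fin r) :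
    dominant M i ≤ c i :=
  le_sub_iff_add_le.mp <| partialSups_le _ _ _ fun j hj =>
    (sub_le_sub_right (hMc j) _).trans (Fin.strictMono_iff_monotone_sub_val.mp hc hj)

end Dominant

theorem stmt_13_general (r : ℕ) (M : Fin r → ℤ) :
    ∃! c : Fin r → ℤ,
      StrictMono c ∧ (∀ i, M i ≤ c i) ∧
      ∀ c' : Fin r → ℤ, StrictMono c' → (∀ i, M i ≤ c' i) → ∀ i, c i ≤ c' i := by
  refine ⟨dominant M, ⟨strictMono_dominant M, le_dominant M, fun _ => dominant_le M⟩, ?_⟩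
  rintro c ⟨hc, hMc, hc_min⟩
  exact le_antisymm (hc_min _ (strictMono_dominant M) (le_dominant M)) (dominant_le M hc hMc)

/-- For a multiset of `r` integers, given by its weakly increasing enumeration `M`, there is a
unique strictly increasing sequence `M̄` of `r` integers (the "dominant" of `M`) such that
`M̄` dominates `M` (pointwise `≥`) and every strictly increasing integer sequence of length `r`
dominating `M` also dominates `M̄`. -/
theorem stmt_13 (r : ℕ) (M : Fin r → ℤ) (hM : Monotone M) :
    ∃! c : Fin r → ℤ,
      StrictMono c ∧ (∀ i, M i ≤ c i) ∧
      ∀ c' : Fin r → ℤ, StrictMono c' → (∀ i, M i ≤ c' i) → ∀ i, c i ≤ c' i :=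
  stmt_13_general r M
end

section
/- Let V_1,...,V_k be finite-dimensional spaces of functions meromorphic around z with dim V_i = d_i, and suppose V = V_1 ⊕ ... ⊕ V_k has dimension Σ d_i. Let M be the multiset union of the exponent sets e(V_i, z). Then the (strictly increasing) sequence of exponents e(V, z) dominates the dominant M̄ of M. -/
/-- The set of exponents of a space `V` of functions meromorphic at `z`. -/
def expSet (V : Submodule ℂ (ℂ → ℂ)) (z : ℂ) : Set ℤ :=
  {m | ∃ f ∈ V, ∃ hf : MeromorphicAt f z, meromorphicOrderAt f z = (m : WithTop ℤ)}

/-!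
Fix `x = mᵢ` and write `Fₓ(W)` for the elements of `W` of order at least `x`. Exponents are
orders, so distinct exponents `≥ x` of `W` give a flag of strictly decreasing subspaces of `Fₓ(W)`,
and `#(e(W) ∩ [x, ∞)) ≤ dim Fₓ(W)`; conversely, since two germs of the same order agree up to a
scalar modulo higher order, `dim Fₓ(W) ≤ #(e(W) ∩ [x, ∞))` when `W` has no nonzero germ of infinite
order. As the sum `V = ⊕ Vⱼ` is direct, `∑ⱼ dim Fₓ(Vⱼ) ≤ dim Fₓ(V)`. Hence
`n - i ≤ #{t | x ≤ mₜ} = ∑ⱼ #(e(Vⱼ) ∩ [x, ∞)) ≤ dim Fₓ(V) ≤ #(e(V) ∩ [x, ∞))`,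
so at least `n - i` exponents of `V` are `≥ x`, which forces `eᵢ ≥ x`.
-/

open Filter Topology Module

section Order

variable {𝕜 : Type*} [NontriviallyNormedField 𝕜] {E : Type*} [NormedAddCommGroup E]
  [NormedSpace 𝕜 E] {x : 𝕜}

theorem meromorphicOrderAt_zero : meromorphicOrderAt (0 : 𝕜 → E) x = ⊤ :=
  meromorphicOrderAt_eq_top_iff.2 (Eventually.of_forall fun _ => rfl)

theorem MeromorphicAt.meromorphicOrderAt_le_const_smul {f : 𝕜 → E} (hf : MeromorphicAt f x)
    (c : 𝕜) : meromorphicOrderAt f x ≤ meromorphicOrderAt (c • f) x := by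
  have hc : AnalyticAt 𝕜 (fun _ => c) x := analyticAt_const
  calc meromorphicOrderAt f x ≤ meromorphicOrderAt (fun _ => c) x + meromorphicOrderAt f x :=
        le_add_of_nonneg_left hc.meromorphicOrderAt_nonneg
    _ = meromorphicOrderAt (c • f) x := (meromorphicOrderAt_smul hc.meromorphicAt hf).symm

-- The `MeromorphicAt` conjunct is essential: `meromorphicOrderAt` takes the junk value `0` at
-- non-meromorphic functions.
variable (E) in
def meromorphicOrderGe (x : 𝕜) (n : ℤ) : Submodule 𝕜 (𝕜 → E) where
  carrier := {f | MeromorphicAt f x ∧ (n : WithTop ℤ) ≤ meromorphicOrderAt f x}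
  zero_mem' := ⟨MeromorphicAt.const 0 x, by rw [meromorphicOrderAt_zero]; exact le_top⟩
  add_mem' hf hg := ⟨hf.1.add hg.1, (le_min hf.2 hg.2).trans (meromorphicOrderAt_add hf.1 hg.1)⟩
  smul_mem' c _ hf := ⟨hf.1.const_smul c, hf.2.trans (hf.1.meromorphicOrderAt_le_const_smul c)⟩

theorem mem_meromorphicOrderGe {f : 𝕜 → E} {n : ℤ} :
    f ∈ meromorphicOrderGe E x n ↔ MeromorphicAt f x ∧ (n : WithTop ℤ) ≤ meromorphicOrderAt f x :=
  Iff.rfl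

theorem meromorphicOrderAt_eq_of_mem_meromorphicOrderGe_of_notMem {f : 𝕜 → E} {n : ℤ}
    (hn : f ∈ meromorphicOrderGe E x n) (hn1 : f ∉ meromorphicOrderGe E x (n + 1)) :
    meromorphicOrderAt f x = n := by
  obtain ⟨hf, hle⟩ := hn
  have hlt : meromorphicOrderAt f x < (n + 1 : ℤ) := by
    simpa [mem_meromorphicOrderGe, hf] using hn1
  lift meromorphicOrderAt f x to ℤ using hlt.ne_top with m
  norm_cast at hlt hle ⊢
  omega

theorem exists_add_one_le_meromorphicOrderAt_sub_smul {f g : 𝕜 → 𝕜} (hf : MeromorphicAt f x)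
    (hg : MeromorphicAt g x) {n : ℤ} (hfn : meromorphicOrderAt f x = n)
    (hgn : meromorphicOrderAt g x = n) :
    ∃ c : 𝕜, ((n + 1 : ℤ) : WithTop ℤ) ≤ meromorphicOrderAt (g - c • f) x := by
  obtain ⟨F, hF, hFx, hfF⟩ := (meromorphicOrderAt_eq_int_iff hf).1 hfn
  obtain ⟨G, hG, -, hgG⟩ := (meromorphicOrderAt_eq_int_iff hg).1 hgn
  refine ⟨G x / F x, ?_⟩
  set H : 𝕜 → 𝕜 := G - (G x / F x) • F
  have hH : AnalyticAt 𝕜 H x := hG.sub hF.const_smul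
  have hH_pos : 0 < meromorphicOrderAt H x := by
    have hHx : H x = 0 := by simp [H, hFx]
    rw [← tendsto_zero_iff_meromorphicOrderAt_pos hH.meromorphicAt, ← hHx]
    exact hH.continuousAt.tendsto.mono_left nhdsWithin_le_nhds
  have hrep : g - (G x / F x) • f =ᶠ[𝓝[≠] x] (· - x) ^ n • H := by
    filter_upwards [hfF, hgG] with w hfw hgw
    show g w - G x / F x * f w = (w - x) ^ n * (G w - G x / F x * F w)
    rw [hfw, hgw, smul_eq_mul, smul_eq_mul]
    ring
  rw [meromorphicOrderAt_congr hrep, meromorphicOrderAt_smul (by fun_prop) hH.meromorphicAt,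
    meromorphicOrderAt_zpow_id_sub_const]
  generalize meromorphicOrderAt H x = a at hH_pos
  induction a with
  | top => simp
  | coe a => norm_cast at hH_pos ⊢; omega

/-- Two elements of `W` of exact order `n` agree up to a scalar modulo higher order terms. -/
theorem finrank_le_finrank_inf_meromorphicOrderGe_add_one {W : Submodule 𝕜 (𝕜 → 𝕜)}
    [FiniteDimensional 𝕜 W] {n : ℤ} (hW : W ≤ meromorphicOrderGe 𝕜 x n) :
    finrank 𝕜 W ≤ finrank 𝕜 ↥(W ⊓ meromorphicOrderGe 𝕜 x (n + 1)) + 1 := by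
  by_cases hle : W ≤ meromorphicOrderGe 𝕜 x (n + 1)
  · rw [inf_eq_left.2 hle]
    exact Nat.le_succ _
  obtain ⟨f, hfW, hf⟩ := SetLike.not_le_iff_exists.1 hle
  have hfn := meromorphicOrderAt_eq_of_mem_meromorphicOrderGe_of_notMem (hW hfW) hf
  have hspan : W ≤ W ⊓ meromorphicOrderGe 𝕜 x (n + 1) ⊔ Submodule.span 𝕜 {f} := by
    intro g hgW
    by_cases hg : g ∈ meromorphicOrderGe 𝕜 x (n + 1)
    · exact Submodule.mem_sup_left ⟨hgW, hg⟩
    obtain ⟨c, hc⟩ := exists_add_one_le_meromorphicOrderAt_sub_smul (hW hfW).1 (hW hgW).1 hfn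
      (meromorphicOrderAt_eq_of_mem_meromorphicOrderGe_of_notMem (hW hgW) hg)
    have hsub : g - c • f ∈ W := W.sub_mem hgW (W.smul_mem c hfW)
    rw [← sub_add_cancel g (c • f)]
    exact Submodule.add_mem_sup ⟨hsub, (hW hsub).1, hc⟩
      (Submodule.smul_mem _ c (Submodule.mem_span_singleton_self f))
  calc finrank 𝕜 W ≤ finrank 𝕜 ↥(W ⊓ meromorphicOrderGe 𝕜 x (n + 1) ⊔ Submodule.span 𝕜 {f}) :=
        Submodule.finrank_mono hspan
    _ ≤ finrank 𝕜 ↥(W ⊓ meromorphicOrderGe 𝕜 x (n + 1)) + finrank 𝕜 ↥(Submodule.span 𝕜 {f}) :=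
        Submodule.finrank_add_le_finrank_add_finrank _ _
    _ = _ := by rw [finrank_span_singleton (by rintro rfl; exact hf (Submodule.zero_mem _))]

end Order

section ExpSet

variable {z : ℂ}

theorem expSet_inf_meromorphicOrderGe (W : Submodule ℂ (ℂ → ℂ)) (n : ℤ) :
    expSet (W ⊓ meromorphicOrderGe ℂ z n) z = expSet W z ∩ Set.Ici n := by
  ext m
  constructor
  · rintro ⟨f, ⟨hfW, -, hfn⟩, hf, hfm⟩
    exact ⟨⟨f, hfW, hf, hfm⟩, by rw [hfm] at hfn; exact_mod_cast hfn⟩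
  · rintro ⟨⟨f, hfW, hf, hfm⟩, hnm⟩
    exact ⟨f, ⟨hfW, hf, by rw [hfm]; exact_mod_cast hnm⟩, hf, hfm⟩

theorem le_meromorphicOrderGe_of_le_expSet {W : Submodule ℂ (ℂ → ℂ)}
    (hmero : ∀ f ∈ W, MeromorphicAt f z) {n : ℤ} (hn : ∀ m ∈ expSet W z, n ≤ m) :
    W ≤ meromorphicOrderGe ℂ z n := by
  intro f hfW
  refine ⟨hmero f hfW, ?_⟩
  induction hfm : meromorphicOrderAt f z with
  | top => exact le_top
  | coe m => exact_mod_cast hn m ⟨f, hfW, hmero f hfW, hfm⟩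

theorem card_le_finrank_of_subset_expSet {W : Submodule ℂ (ℂ → ℂ)} [FiniteDimensional ℂ W]
    {S : Finset ℤ} (hS : ↑S ⊆ expSet W z) : S.card ≤ finrank ℂ W := by
  induction S using Finset.induction_on_min generalizing W with
  | empty => exact Nat.zero_le _
  | insert a S hlt ih =>
    obtain ⟨f, hfW, hf, hfa⟩ := hS (Finset.mem_insert_self a S)
    have hS' : ↑S ⊆ expSet (W ⊓ meromorphicOrderGe ℂ z (a + 1)) z := by
      rw [expSet_inf_meromorphicOrderGe]
      exact fun m hm => ⟨hS (Finset.mem_insert_of_mem hm), hlt m hm⟩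
    have hf' : f ∉ W ⊓ meromorphicOrderGe ℂ z (a + 1) := fun h => by
      have := h.2.2
      rw [hfa] at this
      norm_cast at this
      omega
    have hW : W ⊓ meromorphicOrderGe ℂ z (a + 1) < W :=
      lt_of_le_of_ne inf_le_left fun h => hf' (h.ge hfW)
    calc (insert a S).card ≤ S.card + 1 := Finset.card_insert_le a S
      _ ≤ finrank ℂ ↥(W ⊓ meromorphicOrderGe ℂ z (a + 1)) + 1 := by grw [ih hS']
      _ ≤ finrank ℂ W := Submodule.finrank_lt_finrank_of_lt hW

theorem finrank_le_card_of_expSet_subset {W : Submodule ℂ (ℂ → ℂ)} [FiniteDimensional ℂ W]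
    (hmero : ∀ f ∈ W, MeromorphicAt f z) (hW : ∀ f ∈ W, meromorphicOrderAt f z = ⊤ → f = 0)
    {F : Finset ℤ} (hF : expSet W z ⊆ ↑F) : finrank ℂ W ≤ F.card := by
  induction F using Finset.induction_on_min generalizing W with
  | empty =>
    suffices W = ⊥ by simp [this]
    refine (Submodule.eq_bot_iff W).2 fun f hfW => hW f hfW ?_
    induction hfm : meromorphicOrderAt f z with
    | top => rfl
    | coe m => exact (Finset.notMem_empty m (hF ⟨f, hfW, hmero f hfW, hfm⟩)).elim
  | insert a F hlt ih =>
    have hWa : W ≤ meromorphicOrderGe ℂ z a := le_meromorphicOrderGe_of_le_expSet hmero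
      fun m hm => by
        rcases Finset.mem_insert.1 (hF hm) with rfl | hmF
        exacts [le_rfl, (hlt m hmF).le]
    have hF' : expSet (W ⊓ meromorphicOrderGe ℂ z (a + 1)) z ⊆ ↑F := by
      rw [expSet_inf_meromorphicOrderGe]
      rintro m ⟨hm, ham⟩
      exact (Finset.mem_insert.1 (hF hm)).resolve_left (by simp at ham; omega)
    calc finrank ℂ W ≤ finrank ℂ ↥(W ⊓ meromorphicOrderGe ℂ z (a + 1)) + 1 :=
          finrank_le_finrank_inf_meromorphicOrderGe_add_one hWa
      _ ≤ F.card + 1 := by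
          grw [ih (fun f hf => hmero f (Submodule.mem_inf.1 hf).1)
            (fun f hf => hW f (Submodule.mem_inf.1 hf).1) hF']
      _ = (insert a F).card := (Finset.card_insert_of_notMem fun ha => (hlt a ha).false).symm

end ExpSet

section DirectSum

variable {ι K V : Type*} [Fintype ι] [DecidableEq ι] [DivisionRing K] [AddCommGroup V] [Module K V]
  {A : ι → Submodule K V} [∀ i, FiniteDimensional K (A i)]

theorem iSupIndep_of_finrank_iSup_eq_sum (h : finrank K ↥(⨆ i, A i) = ∑ i, finrank K (A i)) :
    iSupIndep A := by
  apply iSupIndep_of_dfinsupp_lsum_injective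
  rw [← LinearMap.ker_eq_bot, ← Submodule.finrank_eq_zero]
  have hsum : finrank K (Π₀ i, A i) = ∑ i, finrank K (A i) := finrank_directSum K fun i => A i
  have := LinearMap.finrank_range_add_finrank_ker (DFinsupp.lsum ℕ fun i => (A i).subtype)
  rw [← Submodule.iSup_eq_range_dfinsupp_lsum, h, hsum] at this
  omega

theorem iSupIndep.finrank_iSup (h : iSupIndep A) :
    finrank K ↥(⨆ i, A i) = ∑ i, finrank K (A i) := by
  rw [Submodule.iSup_eq_range_dfinsupp_lsum,
    LinearMap.finrank_range_of_inj h.dfinsupp_lsum_injective]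
  exact Module.finrank_directSum K fun i => A i

end DirectSum

theorem Monotone.le_apply_iff_sub_le_card {α : Type*} [LinearOrder α] {n : ℕ} {f : Fin n → α}
    (hf : Monotone f) (i : Fin n) (a : α) :
    a ≤ f i ↔ n - i ≤ (Finset.univ.filter fun t => a ≤ f t).card := by
  constructor
  · intro ha
    rw [← Fin.card_Ici]
    exact Finset.card_le_card fun t ht =>
      Finset.mem_filter.2 ⟨Finset.mem_univ t, ha.trans (hf (Finset.mem_Ici.1 ht))⟩
  · intro hcard
    by_contra! hlt
    have hsub : (Finset.univ.filter fun t => a ≤ f t) ⊆ Finset.Ioi i := fun t ht =>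
      Finset.mem_Ioi.2 <| lt_of_not_ge fun hti =>
        (hf hti).not_gt (hlt.trans_le (Finset.mem_filter.1 ht).2)
    have := (Finset.card_le_card hsub).trans_eq (Fin.card_Ioi i)
    omega

open Classical in
theorem card_filter_mem_eq_sum_card_filter {ι κ α : Type*} [Fintype ι] [Fintype κ] [DecidableEq α]
    {f : ι → α} {E : κ → Set α} (hf : ∀ y, {t | f t = y}.ncard = {j | y ∈ E j}.ncard)
    (Y : Finset α) :
    (Finset.univ.filter fun t => f t ∈ Y).card = ∑ j, (Y.filter (· ∈ E j)).card := by
  rw [Finset.card_eq_sum_card_fiberwise (s := Finset.univ.filter fun t => f t ∈ Y) (t := Y)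
    fun t ht => (Finset.mem_filter.1 ht).2]
  calc ∑ y ∈ Y, ((Finset.univ.filter fun t => f t ∈ Y).filter (f · = y)).card
      = ∑ y ∈ Y, ∑ j, if y ∈ E j then 1 else 0 := Finset.sum_congr rfl fun y hy => by
        rw [← Finset.card_filter, ← Set.ncard_coe_finset, ← Set.ncard_coe_finset]
        convert hf y using 2 <;> ext <;> simp_all +contextual
    _ = ∑ j, (Y.filter (· ∈ E j)).card := by
        rw [Finset.sum_comm]
        simp only [Finset.card_filter]

theorem stmt_15_general (k : ℕ) (z : ℂ) (V : Fin k → Submodule ℂ (ℂ → ℂ)) (d : Fin k → ℕ)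
    (hgerm : ∀ f ∈ (⨆ i, V i : Submodule ℂ (ℂ → ℂ)), ∀ hf : MeromorphicAt f z,
      meromorphicOrderAt f z = ⊤ → f = 0)
    (hdim : ∀ i, Module.finrank ℂ (V i) = d i)
    (hdirect : Module.finrank ℂ (⨆ i, V i : Submodule ℂ (ℂ → ℂ)) = ∑ i, d i) :
    ∀ ms es : Fin (∑ i, d i) → ℤ,
      Monotone ms →
      (∀ x : ℤ, Set.ncard {i | ms i = x} = Set.ncard {j : Fin k | x ∈ expSet (V j) z}) →
      StrictMono es →
      Set.range es = expSet (⨆ i, V i) z →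
      ∀ i, ms i ≤ es i := by
  classical
  intro ms es hms hcount hes hrange i
  have : FiniteDimensional ℂ ↥(⨆ j, V j) := .of_finrank_pos (hdirect ▸ i.pos)
  have (j : Fin k) : FiniteDimensional ℂ (V j) := Submodule.finiteDimensional_of_le (le_iSup V j)
  have hindep : iSupIndep V := iSupIndep_of_finrank_iSup_eq_sum (by simp only [hdirect, hdim])
  set x := ms i
  set P := meromorphicOrderGe ℂ z x
  set Y := (Finset.univ.image ms).filter (x ≤ ·)
  refine (hes.monotone.le_apply_iff_sub_le_card i x).2 ?_
  calc ∑ j, d j - i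
      ≤ (Finset.univ.filter fun t => ms t ∈ Y).card := by
        simpa [Y] using (hms.le_apply_iff_sub_le_card i x).1 le_rfl
    _ = ∑ j, (Y.filter (· ∈ expSet (V j) z)).card := card_filter_mem_eq_sum_card_filter hcount Y
    _ ≤ ∑ j, finrank ℂ ↥(V j ⊓ P) := Finset.sum_le_sum fun j _ =>
        card_le_finrank_of_subset_expSet <| by
          rw [expSet_inf_meromorphicOrderGe]
          intro y hy
          simp only [Finset.coe_filter, Finset.mem_filter, Y] at hy
          exact ⟨hy.2, hy.1.2⟩
    _ = finrank ℂ ↥(⨆ j, V j ⊓ P) := ((hindep.mono fun j => inf_le_left).finrank_iSup).symm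
    _ ≤ finrank ℂ ↥((⨆ j, V j) ⊓ P) :=
        Submodule.finrank_mono (iSup_le fun j => inf_le_inf_right P (le_iSup V j))
    _ ≤ ((Finset.univ.filter fun t => x ≤ es t).image es).card := by
        refine finrank_le_card_of_expSet_subset (W := (⨆ j, V j) ⊓ P) (fun f hf => hf.2.1)
          (fun f hf => hgerm f hf.1 hf.2.1) ?_
        rw [expSet_inf_meromorphicOrderGe, ← hrange]
        rintro _ ⟨⟨t, rfl⟩, ht⟩
        simpa using ⟨t, ht, rfl⟩
    _ = (Finset.univ.filter fun t => x ≤ es t).card :=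
        Finset.card_image_of_injective _ hes.injective

/-- Let `V₁,…,V_k` be spaces of functions meromorphic around `z` with `dim V_i = d_i`, whose
sum `V` is direct of dimension `∑ d_i`.  Then the strictly increasing enumeration `es` of the
exponents `e(V,z)` dominates (pointwise) every weakly increasing enumeration `ms` of the
multiset union of the `e(V_i,z)`; equivalently, `e(V,z)` dominates the dominant `M̄` of that
multiset. -/
theorem stmt_15 (k : ℕ) (z : ℂ) (V : Fin k → Submodule ℂ (ℂ → ℂ)) (d : Fin k → ℕ)
    (hmero : ∀ i, ∀ f ∈ V i, MeromorphicAt f z)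
    (hgerm : ∀ f ∈ (⨆ i, V i : Submodule ℂ (ℂ → ℂ)), ∀ hf : MeromorphicAt f z,
      meromorphicOrderAt f z = ⊤ → f = 0)
    (hdim : ∀ i, Module.finrank ℂ (V i) = d i)
    (hdirect : Module.finrank ℂ (⨆ i, V i : Submodule ℂ (ℂ → ℂ)) = ∑ i, d i) :
    ∀ ms es : Fin (∑ i, d i) → ℤ,
      Monotone ms →
      (∀ x : ℤ, Set.ncard {i | ms i = x} = Set.ncard {j : Fin k | x ∈ expSet (V j) z}) →
      StrictMono es →
      Set.range es = expSet (⨆ i, V i) z →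
      ∀ i, ms i ≤ es i :=
  stmt_15_general k z V d hgerm hdim hdirect
end

section
/- Let T_1 = Π_{k=1}^n (x - z_k)^{p_k} and T_2 = Π_{k=1}^n (x - z_k)^{q_k} with z_k distinct, p_k, q_k nonnegative integers, and let m = #{k : p_k + q_k ≠ 0} ≥ 1. A monic polynomial y of degree l with simple roots distinct from all z_k satisfies ln'(T_1 T_2)(t) = 0 at every root t of y if and only if there exists a polynomial ỹ with y·ỹ = c·N(T), where N(T) = Σ_{k: h_k≠0} h_k Π_{j: h_j≠0, j≠k}(x - z_j), h_k = p_k + q_k, and c a nonzero constant; moreover then deg ỹ = m - 1 - l. -/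
/-!
Writing `T₁T₂ = ∏_{k ∈ S} (x - z_k)^{h_k}`, the derivative factors as
`(T₁T₂)' = N(T) · ∏_{k ∈ S} (x - z_k)^{h_k - 1}`, so away from the `z_k` the logarithmic derivative
`(T₁T₂)'/(T₁T₂)` vanishes exactly where `N(T)` does. A squarefree polynomial over `ℂ` divides every
polynomial vanishing at its roots, which gives the equivalence. The leading coefficient of `N(T)`
in degree `m - 1` is `∑ h_k > 0`, so `deg N(T) = m - 1`, and the degree of `ỹ` follows.
-/

open Polynomial

namespace Polynomial

theorem eval_prod_X_sub_C_pow_ne_zero {ι R : Type*} [CommRing R] [IsDomain R] {S : Finset ι}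
    {z : ι → R} {t : R} (ht : ∀ k ∈ S, t ≠ z k) (e : ι → ℕ) :
    (∏ k ∈ S, (X - C (z k)) ^ e k).eval t ≠ 0 := by
  rw [eval_prod]
  refine Finset.prod_ne_zero_iff.mpr fun k hk => ?_
  rw [eval_pow, eval_sub, eval_X, eval_C]
  exact pow_ne_zero _ (sub_ne_zero.mpr (ht k hk))

section CommRing

variable {ι R : Type*} [DecidableEq ι] [CommRing R]

/-- `N(T)`: the numerator of the logarithmic derivative of `∏_{k ∈ S} (X - z_k)^{h_k}`. -/
noncomputable def logDerivNumerator (S : Finset ι) (z : ι → R) (h : ι → ℕ) : R[X] :=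
  ∑ k ∈ S, C (h k : R) * ∏ j ∈ S.erase k, (X - C (z j))

theorem derivative_prod_X_sub_C_pow {S : Finset ι} {h : ι → ℕ} (hh : ∀ k ∈ S, 1 ≤ h k)
    (z : ι → R) :
    derivative (∏ k ∈ S, (X - C (z k)) ^ h k) =
      logDerivNumerator S z h * ∏ k ∈ S, (X - C (z k)) ^ (h k - 1) := by
  rw [derivative_prod_finset, logDerivNumerator, Finset.sum_mul]
  refine Finset.sum_congr rfl fun k hk => ?_
  have hsplit : ∏ j ∈ S.erase k, (X - C (z j)) ^ h j =
      (∏ j ∈ S.erase k, (X - C (z j))) * ∏ j ∈ S.erase k, (X - C (z j)) ^ (h j - 1) := by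
    rw [← Finset.prod_mul_distrib]
    refine Finset.prod_congr rfl fun j hj => ?_
    rw [← pow_succ', Nat.sub_add_cancel (hh j (Finset.mem_of_mem_erase hj))]
  rw [derivative_X_sub_C_pow, hsplit, ← Finset.mul_prod_erase S _ hk]
  ring

theorem natDegree_prod_erase_X_sub_C [Nontrivial R] {S : Finset ι} {k : ι} (hk : k ∈ S)
    (z : ι → R) : (∏ j ∈ S.erase k, (X - C (z j))).natDegree = S.card - 1 := by
  rw [natDegree_prod_of_monic _ _ fun j _ => monic_X_sub_C (z j)]
  simp [Finset.card_erase_of_mem hk]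

theorem natDegree_logDerivNumerator_le [Nontrivial R] (S : Finset ι) (z : ι → R) (h : ι → ℕ) :
    (logDerivNumerator S z h).natDegree ≤ S.card - 1 :=
  natDegree_sum_le_of_forall_le _ _ fun _ hk =>
    (natDegree_C_mul_le _ _).trans (natDegree_prod_erase_X_sub_C hk z).le

theorem coeff_logDerivNumerator_card_sub_one [Nontrivial R] (S : Finset ι) (z : ι → R)
    (h : ι → ℕ) : (logDerivNumerator S z h).coeff (S.card - 1) = ∑ k ∈ S, (h k : R) := by
  rw [logDerivNumerator, finsetSum_coeff]
  refine Finset.sum_congr rfl fun k hk => ?_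
  have hmonic : (∏ j ∈ S.erase k, (X - C (z j))).Monic :=
    monic_prod_of_monic _ _ fun j _ => monic_X_sub_C (z j)
  rw [coeff_C_mul, ← natDegree_prod_erase_X_sub_C hk z, hmonic.coeff_natDegree, mul_one]

theorem natDegree_logDerivNumerator [CharZero R] {S : Finset ι} {h : ι → ℕ}
    (hh : ∀ k ∈ S, 1 ≤ h k) (z : ι → R) :
    (logDerivNumerator S z h).natDegree = S.card - 1 := by
  rcases S.eq_empty_or_nonempty with rfl | ⟨k, hk⟩
  · simp [logDerivNumerator]
  refine natDegree_eq_of_le_of_coeff_ne_zero (natDegree_logDerivNumerator_le S z h) ?_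
  rw [coeff_logDerivNumerator_card_sub_one, ← Nat.cast_sum, Nat.cast_ne_zero]
  exact (Finset.sum_pos' (fun _ _ => Nat.zero_le _) ⟨k, hk, hh k hk⟩).ne'

end CommRing

theorem eval_derivative_div_eval_eq_zero_iff {ι K : Type*} [DecidableEq ι] [Field K]
    {S : Finset ι} {h : ι → ℕ} (hh : ∀ k ∈ S, 1 ≤ h k) {z : ι → K} {t : K}
    (ht : ∀ k ∈ S, t ≠ z k) :
    (derivative (∏ k ∈ S, (X - C (z k)) ^ h k)).eval t / (∏ k ∈ S, (X - C (z k)) ^ h k).eval t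
      = 0 ↔ (logDerivNumerator S z h).IsRoot t := by
  rw [div_eq_zero_iff, or_iff_left (eval_prod_X_sub_C_pow_ne_zero ht h),
    derivative_prod_X_sub_C_pow hh, eval_mul,
    mul_eq_zero, or_iff_left (eval_prod_X_sub_C_pow_ne_zero ht _), IsRoot.def]

theorem dvd_of_squarefree_of_forall_isRoot {K : Type*} [Field K] [IsAlgClosed K] {y f : K[X]}
    (hy : Squarefree y) (hroots : ∀ t, y.IsRoot t → f.IsRoot t) : y ∣ f := by
  rcases eq_or_ne f 0 with rfl | hf
  · exact dvd_zero y
  refine (IsAlgClosed.splits y).dvd_of_roots_le_roots hy.ne_zero ?_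
  rw [Multiset.le_iff_subset (nodup_roots (PerfectField.separable_iff_squarefree.mpr hy))]
  exact fun t ht => (mem_roots hf).mpr (hroots t (isRoot_of_mem_roots ht))

theorem natDegree_eq_sub_of_mul_eq_C_mul {R : Type*} [CommRing R] [IsDomain R]
    {y g f : R[X]} {c : R} (hy : y ≠ 0) (hc : c ≠ 0) (h : y * g = C c * f) :
    g.natDegree = f.natDegree - y.natDegree := by
  rcases eq_or_ne g 0 with rfl | hg
  · rw [mul_zero, eq_comm, mul_eq_zero, C_eq_zero, or_iff_right hc] at h
    simp [h]
  · have hdeg := congrArg natDegree h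
    rw [natDegree_mul hy hg, natDegree_C_mul hc] at hdeg
    omega

end Polynomial

theorem stmt_16_general (n : ℕ) (z : Fin n → ℂ) (p q : Fin n → ℕ)
    (S : Finset (Fin n)) (hS : S = Finset.univ.filter (fun k => p k + q k ≠ 0))
    (m : ℕ) (hmS : m = S.card)
    (T₁ T₂ NT : Polynomial ℂ)
    (hT₁ : T₁ = ∏ k, (X - C (z k)) ^ (p k))
    (hT₂ : T₂ = ∏ k, (X - C (z k)) ^ (q k))
    (hNT : NT = ∑ k ∈ S, C ((p k + q k : ℕ) : ℂ) * ∏ j ∈ S.erase k, (X - C (z j)))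
    (l : ℕ) (y : Polynomial ℂ) (hdeg : y.natDegree = l)
    (hsimple : Squarefree y) (hroots : ∀ t : ℂ, y.IsRoot t → ∀ k, t ≠ z k) :
    ((∀ t : ℂ, y.IsRoot t →
        (derivative (T₁ * T₂)).eval t / (T₁ * T₂).eval t = 0) ↔
      ∃ yt : Polynomial ℂ, ∃ c : ℂ, c ≠ 0 ∧ y * yt = C c * NT) ∧
    (∀ yt : Polynomial ℂ, ∀ c : ℂ, c ≠ 0 → y * yt = C c * NT →
      yt.natDegree = m - 1 - l) := by
  have hpos : ∀ k ∈ S, 1 ≤ p k + q k := fun k hk => by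
    rw [hS, Finset.mem_filter] at hk
    omega
  have hprod : T₁ * T₂ = ∏ k ∈ S, (X - C (z k)) ^ (p k + q k) := by
    rw [hT₁, hT₂, ← Finset.prod_mul_distrib, hS, Finset.prod_filter_of_ne]
    · simp_rw [pow_add]
    · intro k _ hk h0
      simp [h0] at hk
  replace hNT : NT = logDerivNumerator S z (fun k => p k + q k) := hNT
  have hlogDeriv : ∀ t, y.IsRoot t →
      ((derivative (T₁ * T₂)).eval t / (T₁ * T₂).eval t = 0 ↔ NT.IsRoot t) := fun t ht => by
    rw [hprod, hNT]
    exact eval_derivative_div_eval_eq_zero_iff hpos fun k _ => hroots t ht k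
  refine ⟨⟨fun H => ?_, ?_⟩, fun yt c hc hyt => ?_⟩
  · obtain ⟨yt, hyt⟩ := dvd_of_squarefree_of_forall_isRoot hsimple
      fun t ht => (hlogDeriv t ht).mp (H t ht)
    exact ⟨yt, 1, one_ne_zero, by rw [← hyt, C_1, one_mul]⟩
  · rintro ⟨yt, c, hc, hyt⟩ t ht
    have h0 := congrArg (eval t) hyt
    rw [eval_mul, ht.eq_zero, zero_mul, eval_mul, eval_C, zero_eq_mul] at h0
    exact (hlogDeriv t ht).mpr (h0.resolve_left hc)
  · rw [natDegree_eq_sub_of_mul_eq_C_mul hsimple.ne_zero hc hyt, hdeg, hNT, hmS,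
      natDegree_logDerivNumerator hpos z]

/-- The `gl(1|1)` reproduction lemma: a monic polynomial `y` of degree `l`, with simple roots
distinct from the `z_k`, satisfies `ln'(T₁T₂)(t) = 0` at every root `t` of `y` if and only if
`y·ỹ = c·N(T)` for some polynomial `ỹ` and nonzero constant `c`, where
`N(T) = ∑_{h_k≠0} h_k ∏_{h_j≠0, j≠k}(x - z_j)`; moreover then `deg ỹ = m - 1 - l`. -/
theorem stmt_16 (n : ℕ) (z : Fin n → ℂ) (hz : Function.Injective z) (p q : Fin n → ℕ)
    (S : Finset (Fin n)) (hS : S = Finset.univ.filter (fun k => p k + q k ≠ 0))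
    (m : ℕ) (hmS : m = S.card) (hm : 1 ≤ m)
    (T₁ T₂ NT : Polynomial ℂ)
    (hT₁ : T₁ = ∏ k, (X - C (z k)) ^ (p k))
    (hT₂ : T₂ = ∏ k, (X - C (z k)) ^ (q k))
    (hNT : NT = ∑ k ∈ S, C ((p k + q k : ℕ) : ℂ) * ∏ j ∈ S.erase k, (X - C (z j)))
    (l : ℕ) (y : Polynomial ℂ) (hmonic : y.Monic) (hdeg : y.natDegree = l)
    (hsimple : Squarefree y) (hroots : ∀ t : ℂ, y.IsRoot t → ∀ k, t ≠ z k) :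
    ((∀ t : ℂ, y.IsRoot t →
        (derivative (T₁ * T₂)).eval t / (T₁ * T₂).eval t = 0) ↔
      ∃ yt : Polynomial ℂ, ∃ c : ℂ, c ≠ 0 ∧ y * yt = C c * NT) ∧
    (∀ yt : Polynomial ℂ, ∀ c : ℂ, c ≠ 0 → y * yt = C c * NT →
      yt.natDegree = m - 1 - l) :=
  stmt_16_general n z p q S hS m hmS T₁ T₂ NT hT₁ hT₂ hNT l y hdeg hsimple hroots
end
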